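/- The branching term received by an amended process distinguishes the branches: for any process r in up_list D p b ps A1 A2, the projection of If p.b Then (add_sels p left l A1) Else (add_sels p right l A2) on r is defined, where l = up_list D p b ps A1 A2; in particular the projections of the two amended branches on r are a left-only and a right-only branching term on p, whose merge p & Some Bl // Some Br is always defined. -/

import Mathlib

namespace CC

abbrev Pid := ℕ
abbrev Var := ℕ
abbrev Val := ℕ
abbrev RecVar := ℕ

inductive Label | left | right
deriving Repr

inductive Expr | zero | var (x : Var) | succ (x : Var)
deriving Repr

inductive BExpr | eq (x y : Var)
deriving Repr

/-- Behaviours of the process calculus SP. -/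
inductive Behaviour
| send (p : Pid) (e : Expr) (B : Behaviour)
| recv (p : Pid) (x : Var) (B : Behaviour)
| sel (p : Pid) (l : Label) (B : Behaviour)
| branch (p : Pid) (mL mR : Option Behaviour)
| cond (b : BExpr) (B1 B2 : Behaviour)
| call (X : RecVar)
| nil
deriving Repr

mutual
/-- The merge relation on behaviours. -/
inductive Merge : Behaviour → Behaviour → Behaviour → Prop
| nil : Merge .nil .nil .nil
| call (X) : Merge (.call X) (.call X) (.call X)
| send {B1 B2 B p e} : Merge B1 B2 B → Merge (.send p e B1) (.send p e B2) (.send p e B)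
| recv {B1 B2 B p x} : Merge B1 B2 B → Merge (.recv p x B1) (.recv p x B2) (.recv p x B)
| sel {B1 B2 B p l} : Merge B1 B2 B → Merge (.sel p l B1) (.sel p l B2) (.sel p l B)
| cond {b Bt1 Bt2 Bt Be1 Be2 Be} : Merge Bt1 Bt2 Bt → Merge Be1 Be2 Be →
    Merge (.cond b Bt1 Be1) (.cond b Bt2 Be2) (.cond b Bt Be)
| branch {p mL1 mL2 mL mR1 mR2 mR} : MergeO mL1 mL2 mL → MergeO mR1 mR2 mR →
    Merge (.branch p mL1 mR1) (.branch p mL2 mR2) (.branch p mL mR)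

/-- Componentwise merge on optional behaviours. -/
inductive MergeO : Option Behaviour → Option Behaviour → Option Behaviour → Prop
| none : MergeO none none none
| someNone (B) : MergeO (some B) none (some B)
| noneSome (B) : MergeO none (some B) (some B)
| someSome {B1 B2 B} : Merge B1 B2 B → MergeO (some B1) (some B2) (some B)
end

/-- Interactions. -/
inductive Eta
| com (p : Pid) (e : Expr) (q : Pid) (x : Var)
| sel (p q : Pid) (l : Label)
deriving Repr

/-- Choreographies of Core Choreographies. -/
inductive Chor
| seq (η : Eta) (C : Chor)
| cond (p : Pid) (b : BExpr) (C1 C2 : Chor)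
| call (X : RecVar)
| nil
deriving Repr

/-- Sets of procedure definitions. -/
abbrev DefSet := RecVar → List Pid × Chor

def procsEta : Eta → Finset Pid
| .com p _ q _ => {p, q}
| .sel p q _ => {p, q}

/-- The set of processes occurring in a choreography. -/
def procsC : Chor → Finset Pid
| .seq η C => procsEta η ∪ procsC C
| .cond p _ C1 C2 => insert p (procsC C1 ∪ procsC C2)
| .call _ => ∅
| .nil => ∅

def etaWF : Eta → Prop
| .com p _ q _ => p ≠ q
| .sel p q _ => p ≠ q

/-- Well-formed choreographies: no self-communications. -/
def Chor_WF : Chor → Prop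
| .seq η C => etaWF η ∧ Chor_WF C
| .cond _ _ C1 C2 => Chor_WF C1 ∧ Chor_WF C2
| .call _ => True
| .nil => True

/-- Well-formed choreographic programs. -/
def Program_WF (D : DefSet) (C : Chor) : Prop :=
  Chor_WF C ∧ ∀ X, Chor_WF (D X).2

/-- Behaviour projection. -/
inductive BProj (D : DefSet) : Chor → Pid → Behaviour → Prop
| send {p e q x C B} : BProj D C p B → BProj D (.seq (.com p e q x) C) p (.send q e B)
| recv {p e q x C B} : p ≠ q → BProj D C q B → BProj D (.seq (.com p e q x) C) q (.recv p x B)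
| com {p e q x C r B} : p ≠ r → q ≠ r → BProj D C r B → BProj D (.seq (.com p e q x) C) r B
| pick {p q l C B} : BProj D C p B → BProj D (.seq (.sel p q l) C) p (.sel q l B)
| left {p q C B} : p ≠ q → BProj D C q B →
    BProj D (.seq (.sel p q .left) C) q (.branch p (some B) none)
| right {p q C B} : p ≠ q → BProj D C q B →
    BProj D (.seq (.sel p q .right) C) q (.branch p none (some B))
| selSkip {p q l C r B} : p ≠ r → q ≠ r → BProj D C r B → BProj D (.seq (.sel p q l) C) r B
| condEval {p b C1 C2 B1 B2} : BProj D C1 p B1 → BProj D C2 p B2 →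
    BProj D (.cond p b C1 C2) p (.cond b B1 B2)
| condMerge {p b C1 C2 r B1 B2 B} : p ≠ r → BProj D C1 r B1 → BProj D C2 r B2 →
    Merge B1 B2 B → BProj D (.cond p b C1 C2) r B
| callIn {X r} : r ∈ (D X).1 → BProj D (.call X) r (.call X)
| callOut {X r} : r ∉ (D X).1 → BProj D (.call X) r .nil
| nil {r} : BProj D .nil r .nil

/-- Projectability of a choreography on a process. -/
def projectable_B (D : DefSet) (C : Chor) (p : Pid) : Prop := ∃ B, BProj D C p B

/-- Prepend a selection of label `l` from `p` to each process in `ps`. -/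
def add_sels (p : Pid) (l : Label) (ps : List Pid) (C : Chor) : Chor :=
  ps.foldr (fun r acc => .seq (.sel p r l) acc) C

open Classical in
/-- The processes of `ps` that need to be informed of the outcome of the conditional. -/
noncomputable def up_list (D : DefSet) (p : Pid) (b : BExpr) (ps : List Pid)
    (C1 C2 : Chor) : List Pid :=
  ps.filter fun r => decide (r ≠ p ∧ ¬ projectable_B D (.cond p b C1 C2) r)

/-- The amendment procedure. -/
noncomputable def amend (D : DefSet) (ps : List Pid) : Chor → Chor
| .seq η C => .seq η (amend D ps C)
| .cond p b C1 C2 =>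
    let A1 := amend D ps C1
    let A2 := amend D ps C2
    let l := up_list D p b ps A1 A2
    .cond p b (add_sels p .left l A1) (add_sels p .right l A2)
| .call X => .call X
| .nil => .nil

/-- Amendment of a set of procedure definitions. -/
noncomputable def amend_D (D : DefSet) (ps : List Pid) : DefSet :=
  fun X => ((D X).1, amend D ps (D X).2)

/-- Memory states. -/
abbrev State := Pid → Var → Val

def updState (s : State) (p : Pid) (x : Var) (v : Val) : State :=
  fun q y => if q = p ∧ y = x then v else s q y

def eval : Expr → State → Pid → Val
| .zero, _, _ => 0
| .var x, s, p => s p x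
| .succ x, s, p => s p x + 1

def beval : BExpr → State → Pid → Bool
| .eq x y, s, p => s p x == s p y

/-- Transition labels. -/
inductive TLabel
| com (p : Pid) (v : Val) (q : Pid)
| sel (p q : Pid) (l : Label)
| tau (p : Pid)
deriving Repr

def tlProcs : TLabel → Finset Pid
| .com p _ q => {p, q}
| .sel p q _ => {p, q}
| .tau p => {p}

/-- Labelled transition semantics of choreographic configurations. -/
inductive Step (D : DefSet) : Chor → State → TLabel → Chor → State → Prop
| com {p e q x C s} :
    Step D (.seq (.com p e q x) C) s (.com p (eval e s p) q) C (updState s q x (eval e s p))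
| sel {p q l C s} : Step D (.seq (.sel p q l) C) s (.sel p q l) C s
| thenB {p b C1 C2 s} : beval b s p = true → Step D (.cond p b C1 C2) s (.tau p) C1 s
| elseB {p b C1 C2 s} : beval b s p = false → Step D (.cond p b C1 C2) s (.tau p) C2 s
| call {X p s} : p ∈ (D X).1 → Step D (.call X) s (.tau p) (D X).2 s
| delayEta {η C s t C' s'} : Disjoint (procsEta η) (tlProcs t) →
    Step D C s t C' s' → Step D (.seq η C) s t (.seq η C') s'
| delayCond {p b C1 C2 s t C1' C2' s'} : p ∉ tlProcs t →
    Step D C1 s t C1' s' → Step D C2 s t C2' s' →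
    Step D (.cond p b C1 C2) s t (.cond p b C1' C2') s'

/-- Reflexive-transitive closure of the transition relation. -/
inductive StepMany (D : DefSet) : Chor → State → List TLabel → Chor → State → Prop
| refl {C s} : StepMany D C s [] C s
| step {C s t C' s' tl C'' s''} : Step D C s t C' s' → StepMany D C' s' tl C'' s'' →
    StepMany D C s (t :: tl) C'' s''

/-- Selection expansion of lists of transition labels. -/
inductive SelExp : List TLabel → List TLabel → Prop
| base {tl tl'} : tl.Perm tl' → SelExp tl tl'
| extra {p q l tl tl' tl''} : SelExp tl tl' → (TLabel.sel p q l :: tl').Perm tl'' →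
    SelExp tl tl''

/-- A configuration is stuck when it admits no transition. -/
def Stuck (D : DefSet) (C : Chor) (s : State) : Prop :=
  ∀ t C' s', ¬ Step D C s t C' s'

/-- Termination: there is no infinite execution from the configuration. -/
def Terminates (D : DefSet) (C : Chor) (s : State) : Prop :=
  ¬ ∃ f : ℕ → Chor × State × TLabel,
      (f 0).1 = C ∧ (f 0).2.1 = s ∧
      ∀ n, Step D (f n).1 (f n).2.1 (f n).2.2 (f (n+1)).1 (f (n+1)).2.1

/-- `(D, C)` implements the partial function `f` with input processes `ps`
(storing the inputs in variable `0`) and output process `q`. -/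
def implements (D : DefSet) (C : Chor) {m : ℕ} (f : (Fin m → ℕ) → Part ℕ)
    (ps : Fin m → Pid) (q : Pid) : Prop :=
  ∀ (s : State) (n : Fin m → ℕ), (∀ i, s (ps i) 0 = n i) →
    (∀ v ∈ f n, Terminates D C s ∧
      ∀ tl C' s', StepMany D C s tl C' s' → Stuck D C' s' → s' q 0 = v) ∧
    (¬ (f n).Dom → ¬ ∃ tl C' s', StepMany D C s tl C' s' ∧ Stuck D C' s')

/-- `ps` covers all processes used by the program `(D, C)`. -/
def CoversProcs (D : DefSet) (C : Chor) (ps : List Pid) : Prop :=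
  (∀ r ∈ procsC C, r ∈ ps) ∧ ∀ X, ∀ r ∈ procsC (D X).2, r ∈ ps

end CC

/-!
Every process `r` in the update list differs from `p`, so in `add_sels p l qs A` the first
selection from `p` to `r` projects on `r` to a branching term offering only `l`, while the
selections to other processes are skipped. A left-only and a right-only branching term on `p`
always merge.
-/

namespace CC

def Behaviour.singleBranch (p : Pid) : Label → Behaviour → Behaviour
  | .left, B => .branch p (some B) none
  | .right, B => .branch p none (some B)

theorem Merge.branch_some_none_none_some (p : Pid) (Bl Br : Behaviour) :
    Merge (.branch p (some Bl) none) (.branch p none (some Br))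
      (.branch p (some Bl) (some Br)) :=
  .branch (.someNone Bl) (.noneSome Br)

theorem BProj.sel_receiver {D : DefSet} {p q : Pid} {C : Chor} {B : Behaviour} (l : Label)
    (hpq : p ≠ q) (h : BProj D C q B) :
    BProj D (.seq (.sel p q l) C) q (.singleBranch p l B) := by
  cases l
  · exact .left hpq h
  · exact .right hpq h

variable {D : DefSet} {p r : Pid} {l : Label} {A : Chor}

theorem projectable_add_sels (qs : List Pid) (hrp : r ≠ p) (hA : projectable_B D A r) :
    projectable_B D (add_sels p l qs A) r := by
  induction qs with
  | nil => exact hA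
  | cons q qs ih =>
    obtain ⟨B, hB⟩ := ih
    by_cases hqr : q = r
    · subst hqr
      exact ⟨_, .sel_receiver l hrp.symm hB⟩
    · exact ⟨B, .selSkip hrp.symm hqr hB⟩

theorem BProj.add_sels_of_mem {qs : List Pid} (hr : r ∈ qs) (hrp : r ≠ p)
    (hA : projectable_B D A r) :
    ∃ B, BProj D (add_sels p l qs A) r (.singleBranch p l B) := by
  induction qs with
  | nil => cases hr
  | cons q qs ih =>
    by_cases hqr : q = r
    · subst hqr
      obtain ⟨B, hB⟩ := projectable_add_sels (l := l) qs hrp hA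
      exact ⟨B, .sel_receiver l hrp.symm hB⟩
    · obtain ⟨B, hB⟩ := ih ((List.mem_cons.1 hr).resolve_left (Ne.symm hqr))
      exact ⟨B, .selSkip hrp.symm hqr hB⟩

theorem ne_of_mem_up_list {b : BExpr} {ps : List Pid} {C1 C2 : Chor}
    (hr : r ∈ up_list D p b ps C1 C2) : r ≠ p := by
  simp only [up_list, List.mem_filter, decide_eq_true_eq] at hr
  exact hr.2.1

end CC

open CC in
theorem amend_branch_proj (D : CC.DefSet) (p : CC.Pid) (b : CC.BExpr)
    (ps : List CC.Pid) (A1 A2 : CC.Chor) (r : CC.Pid)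
    (hr : r ∈ up_list D p b ps A1 A2)
    (h1 : ∃ B1, BProj D A1 r B1) (h2 : ∃ B2, BProj D A2 r B2) :
    ∃ Bl Br,
      BProj D (add_sels p .left (up_list D p b ps A1 A2) A1) r (.branch p (some Bl) none) ∧
      BProj D (add_sels p .right (up_list D p b ps A1 A2) A2) r (.branch p none (some Br)) ∧
      Merge (.branch p (some Bl) none) (.branch p none (some Br))
        (.branch p (some Bl) (some Br)) ∧
      BProj D
        (.cond p b (add_sels p .left (up_list D p b ps A1 A2) A1)
                   (add_sels p .right (up_list D p b ps A1 A2) A2))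
        r (.branch p (some Bl) (some Br)) := by
  have hrp := ne_of_mem_up_list hr
  obtain ⟨Bl, hBl⟩ := BProj.add_sels_of_mem (l := .left) hr hrp h1
  obtain ⟨Br, hBr⟩ := BProj.add_sels_of_mem (l := .right) hr hrp h2
  have hmerge := Merge.branch_some_none_none_some p Bl Br
  exact ⟨Bl, Br, hBl, hBr, hmerge, .condMerge hrp.symm hBl hBr hmerge⟩
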